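/- Let D₀ = [[1,2],[0,0]] and D₁ = [[1,2],[1,0]], and let M = D₀⊗D₀ + D₁⊗D₁ = [[2,4,4,8],[1,0,2,0],[1,2,0,0],[1,0,0,0]]. Then the characteristic polynomial of M equals (X+2)(X³−4X²−12X+16); consequently the largest real eigenvalue ξ of (1/2)M satisfies ξ³ − 2ξ² − 3ξ + 2 = 0 and lies in the interval (2.81, 2.82). -/

import Mathlib

open Matrix Kronecker Polynomial

/-- The transfer matrices for counting odd coefficients of `(1+x+x²)^n`. -/
noncomputable def triD0 : Matrix (Fin 2) (Fin 2) ℝ := !![1, 2; 0, 0]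

noncomputable def triD1 : Matrix (Fin 2) (Fin 2) ℝ := !![1, 2; 1, 0]

/-- The 4×4 matrix `M = D₀⊗D₀ + D₁⊗D₁`, written with rows and columns indexed by `Fin 4`
in the usual (row-major) order. -/
noncomputable def triKron : Matrix (Fin 4) (Fin 4) ℝ :=
  Matrix.reindex finProdFinEquiv finProdFinEquiv (triD0 ⊗ₖ triD0 + triD1 ⊗ₖ triD1)

/-!
Expanding the Kronecker products gives the explicit matrix `M`, and a cofactor expansion gives
its characteristic polynomial. The spectrum of `½ M` is half that of `M`, so it is the zero set
of `(ξ + 1)(ξ³ - 2ξ² - 3ξ + 2)`. The cubic changes sign on `[2.81, 2.82]`, and it has no root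
beyond a root `ξ ≥ 2`.
-/

theorem Matrix.det_fin_four_of {R : Type*} [CommRing R] (a b c d e f g h i j k l m n o p : R) :
    !![a, b, c, d; e, f, g, h; i, j, k, l; m, n, o, p].det =
      a * (f * (k * p - l * o) - g * (j * p - l * n) + h * (j * o - k * n))
      - b * (e * (k * p - l * o) - g * (i * p - l * m) + h * (i * o - k * m))
      + c * (e * (j * p - l * n) - f * (i * p - l * m) + h * (i * n - j * m))
      - d * (e * (j * o - k * n) - f * (i * o - k * m) + g * (i * n - j * m)) := by
  rw [det_succ_row_zero, Fin.sum_univ_four]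
  simp only [det_fin_three, submatrix_apply, of_apply, cons_val', cons_val_zero, cons_val_one,
    cons_val, cons_val_fin_one, Fin.succAbove, Fin.succ_zero_eq_one, Fin.succ_one_eq_two,
    Fin.reduceSucc, Fin.castSucc_zero, Fin.castSucc_one, Fin.reduceCastSucc, Fin.reduceLT,
    Fin.lt_one_iff, zero_lt_one, lt_self_iff_false, Fin.reduceEq, ↓reduceIte, Fin.isValue,
    Fin.coe_ofNat_eq_mod]
  ring

lemma triKron_eq : triKron = !![2, 4, 4, 8; 1, 0, 2, 0; 1, 2, 0, 0; 1, 0, 0, 0] := by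
  ext i j
  fin_cases i <;> fin_cases j <;>
    norm_num [triKron, triD0, triD1, finProdFinEquiv, Fin.divNat, Fin.modNat]

lemma charmatrix_triKron : charmatrix triKron =
    !![X - 2, -4, -4, -8; -1, X, -2, 0; -1, -2, X, 0; -1, 0, 0, X] := by
  rw [triKron_eq]
  ext i j
  fin_cases i <;> fin_cases j <;> simp [map_ofNat]

lemma triKron_charpoly :
    triKron.charpoly = (X + 2) * (X ^ 3 - 4 * X ^ 2 - 12 * X + 16) := by
  rw [charpoly, charmatrix_triKron, det_fin_four_of]
  ring

theorem spectrum.smul_mem_smul_iff₀ {K A : Type*} [Field K] [Ring A] [Algebra K A]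
    {a : A} {c μ : K} (hc : c ≠ 0) : c • μ ∈ spectrum K (c • a) ↔ μ ∈ spectrum K a :=
  spectrum.smul_mem_smul_iff (r := Units.mk0 c hc)

lemma mem_spectrum_triKron_iff (μ : ℝ) :
    μ ∈ spectrum ℝ triKron ↔ (μ + 2) * (μ ^ 3 - 4 * μ ^ 2 - 12 * μ + 16) = 0 := by
  simp [mem_spectrum_iff_isRoot_charpoly, triKron_charpoly]

lemma mem_spectrum_half_triKron_iff (ξ : ℝ) :
    ξ ∈ spectrum ℝ ((1 / 2 : ℝ) • triKron) ↔ (ξ + 1) * (ξ ^ 3 - 2 * ξ ^ 2 - 3 * ξ + 2) = 0 := by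
  rw [← spectrum.smul_mem_smul_iff₀ two_ne_zero, smul_smul, smul_eq_mul,
    show (2 : ℝ) * (1 / 2) = 1 by norm_num, one_smul, mem_spectrum_triKron_iff]
  constructor <;> intro h
  · linear_combination h / 16
  · linear_combination 16 * h

lemma exists_cubic_root_mem_Ioo :
    ∃ ξ ∈ Set.Ioo (2.81 : ℝ) 2.82, ξ ^ 3 - 2 * ξ ^ 2 - 3 * ξ + 2 = 0 := by
  have hcont : ContinuousOn (fun x : ℝ => x ^ 3 - 2 * x ^ 2 - 3 * x + 2) (Set.Icc 2.81 2.82) := by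
    fun_prop
  exact intermediate_value_Ioo (by norm_num) hcont (by norm_num)

/-- The difference of the two values of the cubic is `(μ - ξ)(μ² + μξ + ξ² - 2(μ + ξ) - 3)`,
and the second factor is positive once `μ > ξ ≥ 2`. -/
lemma cubic_root_le {ξ μ : ℝ} (hξ : 2 ≤ ξ) (hξ_root : ξ ^ 3 - 2 * ξ ^ 2 - 3 * ξ + 2 = 0)
    (hμ_root : μ ^ 3 - 2 * μ ^ 2 - 3 * μ + 2 = 0) : μ ≤ ξ := by
  by_contra! hlt
  have hquot : 0 < μ ^ 2 + μ * ξ + ξ ^ 2 - 2 * (μ + ξ) - 3 := by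
    nlinarith
  nlinarith [mul_pos (sub_pos.2 hlt) hquot]

/-- `M = D₀⊗D₀ + D₁⊗D₁ = [[2,4,4,8],[1,0,2,0],[1,2,0,0],[1,0,0,0]]`, its characteristic
polynomial is `(X+2)(X³−4X²−12X+16)`, and the largest real eigenvalue `ξ` of `(1/2)M`
satisfies `ξ³−2ξ²−3ξ+2 = 0` and `2.81 < ξ < 2.82`. -/
theorem trinomial_kronecker_charpoly :
    triKron = !![2, 4, 4, 8; 1, 0, 2, 0; 1, 2, 0, 0; 1, 0, 0, 0] ∧
    triKron.charpoly = (X + 2) * (X ^ 3 - 4 * X ^ 2 - 12 * X + 16) ∧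
    ∃ ξ : ℝ, ξ ∈ spectrum ℝ ((1 / 2 : ℝ) • triKron) ∧
      (∀ μ ∈ spectrum ℝ ((1 / 2 : ℝ) • triKron), μ ≤ ξ) ∧
      ξ ^ 3 - 2 * ξ ^ 2 - 3 * ξ + 2 = 0 ∧ 2.81 < ξ ∧ ξ < 2.82 := by
  obtain ⟨ξ, ⟨hξ_gt, hξ_lt⟩, hξ_root⟩ := exists_cubic_root_mem_Ioo
  refine ⟨triKron_eq, triKron_charpoly, ξ, ?_, fun μ hμ => ?_, hξ_root, hξ_gt, hξ_lt⟩
  · rw [mem_spectrum_half_triKron_iff, hξ_root, mul_zero]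
  · rcases mul_eq_zero.1 ((mem_spectrum_half_triKron_iff μ).1 hμ) with h | h
    · linarith
    · exact cubic_root_le (by linarith) hξ_root h
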